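/- Fix κ > 0 and let g_κ(r) := e^{−κr}/(4πr). For any six distinct points y₁, …, y₆ on the unit sphere S² ⊂ ℝ³, ∑_{j ≠ j'} g_κ(‖y_j − y_{j'}‖) ≥ 24 g_κ(√2) + 6 g_κ(2), with equality if and only if the six points are the vertices of a regular octahedron inscribed in the sphere, i.e. there exist pairwise orthogonal unit vectors u, v, w with {y₁, …, y₆} = {±u, ±v, ±w}. -/

import Mathlib

/-!
Write `f(t) = e^{-κ√t}/√t`, so that `4π g_κ(r) = f(r²)`, and `‖y_i - y_j‖² = 2 - 2 s_{ij}` with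
`s_{ij} = ⟪y_i, y_j⟫`. The derivatives of `f` alternate in sign; since `f⁽⁴⁾ > 0`, `f` lies above
its cubic Hermite interpolant `p` at the nodes `2` and `4` on all of `(0, ∞)`, touching it only at
the nodes. As a polynomial in `s`, `p(2 - 2s) = f(2) + b₁ s + b₂ s² + b₃ s³` with `b₁, b₂, b₃ > 0`
(the signs of `f'`, `f''`, `f'''`), while the power sums `S_k = ∑_{i,j} s_{ij}^k` satisfy
`S₁ = ‖∑ y_i‖² ≥ 0`, `S₂ ≥ 6²/3 = 12` and `S₃ ≥ 0`. Summing `p` over the 30 ordered pairs gives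
the bound. Equality forces every `‖y_i - y_j‖²` into `{2, 4}` and `∑ y_i = 0`: distinct points are
then orthogonal or antipodal, every point has an antipode (as `⟪y_i, ∑ y_j⟫ = 0`), and six such
points in `ℝ³` are the vertices of an octahedron.
-/

/-- The free resolvent kernel of `−Δ` in `ℝ³` at energy `−κ²`:
`g_κ(r) = e^{−κr}/(4πr)`. -/
noncomputable def resolventKernel3D (κ r : ℝ) : ℝ :=
  Real.exp (-κ * r) / (4 * Real.pi * r)

/-- The interaction energy `∑_{j ≠ j'} g_κ(‖y_j − y_{j'}‖)` of a family of points,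
the sum running over ordered pairs of distinct indices. -/
noncomputable def interactionEnergy {n : ℕ} (κ : ℝ)
    (y : Fin n → EuclideanSpace ℝ (Fin 3)) : ℝ :=
  ∑ p ∈ Finset.univ.offDiag, resolventKernel3D κ ‖y p.1 - y p.2‖

open Real Polynomial

section SqKernel

noncomputable def expSqrtMul (κ : ℝ) (P : ℝ[X]) (n : ℕ) (t : ℝ) : ℝ :=
  exp (-κ * √t) * P.eval (κ * √t) / √t ^ n

noncomputable def besselStep (n : ℕ) (P : ℝ[X]) : ℝ[X] :=
  C (1 / 2) * (X * (derivative P - P) - C (n : ℝ) * P)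

theorem hasDerivAt_expSqrtMul (κ : ℝ) (P : ℝ[X]) (n : ℕ) {t : ℝ} (ht : 0 < t) :
    HasDerivAt (expSqrtMul κ P n) (expSqrtMul κ (besselStep n P) (n + 2) t) t := by
  have hs : 0 < √t := sqrt_pos.2 ht
  have hsqrt : HasDerivAt (√·) (1 / (2 * √t)) t := hasDerivAt_sqrt ht.ne'
  have hE := (hsqrt.const_mul (-κ)).exp
  have hP := (P.hasDerivAt (κ * √t)).comp t (hsqrt.const_mul κ)
  refine ((hE.mul hP).div (hsqrt.pow n) (pow_pos hs n).ne').congr_deriv ?_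
  simp only [expSqrtMul, besselStep, eval_mul, eval_sub, eval_C, eval_X, Function.comp_apply,
    Pi.mul_apply, Pi.pow_apply]
  rcases n with _ | n
  · field_simp
    ring
  · simp only [Nat.add_sub_cancel, pow_succ]
    field_simp
    ring

noncomputable def sqKernelPoly : ℕ → ℝ[X]
  | 0 => 1
  | k + 1 => besselStep (2 * k + 1) (sqKernelPoly k)

/-- The `k`-th derivative of `t ↦ e^{-κ√t}/√t = 4π g_κ(√t)` on `t > 0`; the polynomial
`(-2) ^ k * sqKernelPoly k` is the `k`-th reverse Bessel polynomial. -/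
noncomputable def sqKernelDeriv (κ : ℝ) (k : ℕ) : ℝ → ℝ :=
  expSqrtMul κ (sqKernelPoly k) (2 * k + 1)

theorem hasDerivAt_sqKernelDeriv (κ : ℝ) (k : ℕ) :
    ∀ t ∈ Set.Ioi 0, HasDerivAt (sqKernelDeriv κ k) (sqKernelDeriv κ (k + 1) t) t :=
  fun _ ht => hasDerivAt_expSqrtMul κ _ _ ht

theorem eval_sqKernelPoly (x : ℝ) :
    (sqKernelPoly 1).eval x = -(x + 1) / 2 ∧
    (sqKernelPoly 2).eval x = (x ^ 2 + 3 * x + 3) / 4 ∧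
    (sqKernelPoly 3).eval x = -(x ^ 3 + 6 * x ^ 2 + 15 * x + 15) / 8 ∧
    (sqKernelPoly 4).eval x = (x ^ 4 + 10 * x ^ 3 + 45 * x ^ 2 + 105 * x + 105) / 16 := by
  refine ⟨?_, ?_, ?_, ?_⟩ <;>
    simp only [sqKernelPoly, besselStep, derivative_mul, derivative_sub, derivative_add,
      derivative_C, derivative_X, derivative_one, derivative_zero, eval_mul, eval_sub, eval_add,
      eval_C, eval_X, eval_one, eval_zero] <;>
    ring

theorem neg_one_pow_mul_eval_sqKernelPoly_pos {x : ℝ} (hx : 0 ≤ x) {k : ℕ} (hk : k ≤ 4) :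
    0 < (-1) ^ k * (sqKernelPoly k).eval x := by
  obtain ⟨h₁, h₂, h₃, h₄⟩ := eval_sqKernelPoly x
  have := pow_nonneg hx 2
  have := pow_nonneg hx 3
  have := pow_nonneg hx 4
  interval_cases k
  · simp [sqKernelPoly]
  · rw [h₁]; linarith
  · rw [h₂]; linarith
  · rw [h₃]; linarith
  · rw [h₄]; linarith

theorem neg_one_pow_mul_sqKernelDeriv_pos {κ t : ℝ} (hκ : 0 ≤ κ) (ht : 0 < t) {k : ℕ}
    (hk : k ≤ 4) : 0 < (-1) ^ k * sqKernelDeriv κ k t := by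
  have hP := neg_one_pow_mul_eval_sqKernelPoly_pos (mul_nonneg hκ (sqrt_nonneg t)) hk
  rw [sqKernelDeriv, expSqrtMul, mul_div_assoc', mul_left_comm]
  exact div_pos (mul_pos (exp_pos _) hP) (pow_pos (sqrt_pos.2 ht) _)

theorem sqKernelDeriv_one_neg {κ t : ℝ} (hκ : 0 ≤ κ) (ht : 0 < t) : sqKernelDeriv κ 1 t < 0 := by
  have := neg_one_pow_mul_sqKernelDeriv_pos hκ ht (k := 1) (by norm_num)
  norm_num at this
  exact this

theorem resolventKernel3D_eq_sqKernelDeriv (κ : ℝ) {r : ℝ} (hr : 0 ≤ r) :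
    resolventKernel3D κ r = sqKernelDeriv κ 0 (r ^ 2) / (4 * π) := by
  simp only [resolventKernel3D, sqKernelDeriv, expSqrtMul, sqKernelPoly, sqrt_sq hr, eval_one]
  ring

theorem interactionEnergy_eq_sum_sqKernelDeriv (κ : ℝ) {n : ℕ}
    (y : Fin n → EuclideanSpace ℝ (Fin 3)) :
    interactionEnergy κ y
      = (∑ p ∈ Finset.univ.offDiag, sqKernelDeriv κ 0 (‖y p.1 - y p.2‖ ^ 2)) / (4 * π) := by
  rw [interactionEnergy, Finset.sum_div]
  exact Finset.sum_congr rfl fun p _ => resolventKernel3D_eq_sqKernelDeriv κ (norm_nonneg _)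

end SqKernel

section RolleChain

open Set

variable {I : Set ℝ} [I.OrdConnected] {f f₁ f₂ f₃ f₄ : ℝ → ℝ}

theorem exists_mem_hasDerivAt_eq_zero (hf : ∀ x ∈ I, HasDerivAt f (f₁ x) x) {a b : ℝ}
    (ha : a ∈ I) (hb : b ∈ I) (hab : a < b) (hfa : f a = 0) (hfb : f b = 0) :
    ∃ c ∈ I, a < c ∧ c < b ∧ f₁ c = 0 := by
  have hI : Icc a b ⊆ I := Set.Icc_subset I ha hb
  obtain ⟨c, hc, hc₀⟩ := exists_hasDerivAt_eq_zero hab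
    (fun x hx => (hf x (hI hx)).continuousAt.continuousWithinAt) (hfa.trans hfb.symm)
    (fun x hx => hf x (hI (Ioo_subset_Icc_self hx)))
  exact ⟨c, hI (Ioo_subset_Icc_self hc), hc.1, hc.2, hc₀⟩

theorem exists_second_deriv_eq_zero (hf : ∀ x ∈ I, HasDerivAt f (f₁ x) x)
    (hf₁ : ∀ x ∈ I, HasDerivAt f₁ (f₂ x) x) {a b c : ℝ} (ha : a ∈ I) (hb : b ∈ I) (hc : c ∈ I)
    (hab : a < b) (hbc : b < c) (hfa : f a = 0) (hfb : f b = 0) (hfc : f c = 0) :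
    ∃ ξ ∈ I, f₂ ξ = 0 := by
  obtain ⟨p, hp, -, hpb, hfp⟩ := exists_mem_hasDerivAt_eq_zero hf ha hb hab hfa hfb
  obtain ⟨q, hq, hbq, -, hfq⟩ := exists_mem_hasDerivAt_eq_zero hf hb hc hbc hfb hfc
  obtain ⟨ξ, hξ, -, -, hξ₀⟩ := exists_mem_hasDerivAt_eq_zero hf₁ hp hq (hpb.trans hbq) hfp hfq
  exact ⟨ξ, hξ, hξ₀⟩

theorem exists_third_deriv_eq_zero (hf : ∀ x ∈ I, HasDerivAt f (f₁ x) x)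
    (hf₁ : ∀ x ∈ I, HasDerivAt f₁ (f₂ x) x) (hf₂ : ∀ x ∈ I, HasDerivAt f₂ (f₃ x) x)
    {a b c d : ℝ} (ha : a ∈ I) (hb : b ∈ I) (hc : c ∈ I) (hd : d ∈ I)
    (hab : a < b) (hbc : b < c) (hcd : c < d)
    (hfa : f a = 0) (hfb : f b = 0) (hfc : f c = 0) (hfd : f d = 0) :
    ∃ ξ ∈ I, f₃ ξ = 0 := by
  obtain ⟨p, hp, -, hpb, hfp⟩ := exists_mem_hasDerivAt_eq_zero hf ha hb hab hfa hfb
  obtain ⟨q, hq, hbq, hqc, hfq⟩ := exists_mem_hasDerivAt_eq_zero hf hb hc hbc hfb hfc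
  obtain ⟨r, hr, hcr, -, hfr⟩ := exists_mem_hasDerivAt_eq_zero hf hc hd hcd hfc hfd
  exact exists_second_deriv_eq_zero hf₁ hf₂ hp hq hr (hpb.trans hbq) (hqc.trans hcr) hfp hfq hfr

/-- Five zeros counted with multiplicity (double at `a` and `b`, simple at `t`) leave a zero of
the fourth derivative. -/
theorem exists_fourth_deriv_eq_zero (hf : ∀ x ∈ I, HasDerivAt f (f₁ x) x)
    (hf₁ : ∀ x ∈ I, HasDerivAt f₁ (f₂ x) x) (hf₂ : ∀ x ∈ I, HasDerivAt f₂ (f₃ x) x)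
    (hf₃ : ∀ x ∈ I, HasDerivAt f₃ (f₄ x) x) {a b t : ℝ} (ha : a ∈ I) (hb : b ∈ I) (ht : t ∈ I)
    (hab : a < b) (hta : t ≠ a) (htb : t ≠ b) (hfa : f a = 0) (hf₁a : f₁ a = 0)
    (hfb : f b = 0) (hf₁b : f₁ b = 0) (hft : f t = 0) : ∃ ξ ∈ I, f₄ ξ = 0 := by
  rcases lt_or_gt_of_ne hta with hta | hat
  · obtain ⟨p, hp, -, hpa, hfp⟩ := exists_mem_hasDerivAt_eq_zero hf ht ha hta hft hfa
    obtain ⟨q, hq, haq, hqb, hfq⟩ := exists_mem_hasDerivAt_eq_zero hf ha hb hab hfa hfb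
    exact exists_third_deriv_eq_zero hf₁ hf₂ hf₃ hp ha hq hb hpa haq hqb hfp hf₁a hfq hf₁b
  rcases lt_or_gt_of_ne htb with htb | hbt
  · obtain ⟨p, hp, hap, hpt, hfp⟩ := exists_mem_hasDerivAt_eq_zero hf ha ht hat hfa hft
    obtain ⟨q, hq, htq, hqb, hfq⟩ := exists_mem_hasDerivAt_eq_zero hf ht hb htb hft hfb
    exact exists_third_deriv_eq_zero hf₁ hf₂ hf₃ ha hp hq hb hap (hpt.trans htq) hqb
      hf₁a hfp hfq hf₁b
  · obtain ⟨p, hp, hap, hpb, hfp⟩ := exists_mem_hasDerivAt_eq_zero hf ha hb hab hfa hfb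
    obtain ⟨q, hq, hbq, -, hfq⟩ := exists_mem_hasDerivAt_eq_zero hf hb ht hbt hfb hft
    exact exists_third_deriv_eq_zero hf₁ hf₂ hf₃ ha hp hb hq hap hpb hbq hf₁a hfp hf₁b hfq

end RolleChain

section Hermite

noncomputable def newtonCubic (a b c₀ c₁ c₂ c₃ : ℝ) : ℝ[X] :=
  C c₀ + C c₁ * (X - C a) + C c₂ * (X - C a) ^ 2 + C c₃ * ((X - C a) ^ 2 * (X - C b))

section NewtonCubic

variable {a b c₀ c₁ c₂ c₃ : ℝ}

@[simp]
theorem eval_newtonCubic_left : (newtonCubic a b c₀ c₁ c₂ c₃).eval a = c₀ := by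
  simp [newtonCubic]

@[simp]
theorem eval_derivative_newtonCubic_left :
    (derivative (newtonCubic a b c₀ c₁ c₂ c₃)).eval a = c₁ := by
  simp [newtonCubic, sq]

theorem eval_newtonCubic_right :
    (newtonCubic a b c₀ c₁ c₂ c₃).eval b = c₀ + c₁ * (b - a) + c₂ * (b - a) ^ 2 := by
  simp [newtonCubic]

theorem eval_derivative_newtonCubic_right :
    (derivative (newtonCubic a b c₀ c₁ c₂ c₃)).eval b
      = c₁ + 2 * c₂ * (b - a) + c₃ * (b - a) ^ 2 := by
  simp only [newtonCubic, sq, derivative_add, derivative_sub, derivative_mul, derivative_C,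
    derivative_X, eval_add, eval_sub, eval_mul, eval_C, eval_X, eval_zero, eval_one]
  ring

theorem eval_iterate_derivative_two_newtonCubic (x : ℝ) :
    (derivative^[2] (newtonCubic a b c₀ c₁ c₂ c₃)).eval x
      = 2 * c₂ + c₃ * (6 * x - 4 * a - 2 * b) := by
  simp only [newtonCubic, sq, Function.iterate_succ_apply', Function.iterate_zero_apply,
    derivative_add, derivative_sub, derivative_mul, derivative_C, derivative_X, derivative_zero,
    derivative_one, eval_add, eval_sub, eval_mul, eval_C, eval_X, eval_zero, eval_one]
  ring

theorem eval_iterate_derivative_three_newtonCubic (x : ℝ) :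
    (derivative^[3] (newtonCubic a b c₀ c₁ c₂ c₃)).eval x = 6 * c₃ := by
  simp only [newtonCubic, sq, Function.iterate_succ_apply', Function.iterate_zero_apply,
    derivative_add, derivative_sub, derivative_mul, derivative_C, derivative_X, derivative_zero,
    derivative_one, eval_add, eval_sub, eval_mul, eval_C, eval_X, eval_zero, eval_one]
  ring

theorem iterate_derivative_four_newtonCubic :
    derivative^[4] (newtonCubic a b c₀ c₁ c₂ c₃) = 0 := by
  simp only [newtonCubic, sq, Function.iterate_succ_apply', Function.iterate_zero_apply,
    derivative_add, derivative_sub, derivative_mul, derivative_C, derivative_X, derivative_zero,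
    derivative_one]
  ring

end NewtonCubic

/-- `hermiteCoeff₂ f f₁ a b` and `hermiteCoeff₃ f f₁ a b` are the confluent divided differences
`f[a, a, b]` and `f[a, a, b, b]` (with `f₁ = f'`), so that `hermiteCubic f f₁ a b` is the Newton
form of the cubic agreeing with `f` and `f'` at `a` and `b`. -/
noncomputable def hermiteCoeff₂ (f f₁ : ℝ → ℝ) (a b : ℝ) : ℝ :=
  (f b - f a - (b - a) * f₁ a) / (b - a) ^ 2

noncomputable def hermiteCoeff₃ (f f₁ : ℝ → ℝ) (a b : ℝ) : ℝ :=
  (f₁ b + f₁ a - 2 * (f b - f a) / (b - a)) / (b - a) ^ 2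

noncomputable def hermiteCubic (f f₁ : ℝ → ℝ) (a b : ℝ) : ℝ[X] :=
  newtonCubic a b (f a) (f₁ a) (hermiteCoeff₂ f f₁ a b) (hermiteCoeff₃ f f₁ a b)

variable {I : Set ℝ} {f f₁ f₂ f₃ f₄ : ℝ → ℝ} {a b : ℝ}

theorem eval_hermiteCubic_right (hab : a ≠ b) : (hermiteCubic f f₁ a b).eval b = f b := by
  rw [hermiteCubic, eval_newtonCubic_right, hermiteCoeff₂]
  field_simp [sub_ne_zero.2 hab.symm]
  ring

theorem eval_derivative_hermiteCubic_right (hab : a ≠ b) :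
    (derivative (hermiteCubic f f₁ a b)).eval b = f₁ b := by
  rw [hermiteCubic, eval_derivative_newtonCubic_right, hermiteCoeff₂, hermiteCoeff₃]
  field_simp [sub_ne_zero.2 hab.symm]
  ring

theorem hasDerivAt_sub_eval_iterate_derivative (P : ℝ[X]) (k : ℕ)
    (hf : ∀ x ∈ I, HasDerivAt f (f₁ x) x) :
    ∀ x ∈ I, HasDerivAt (fun y => f y - (derivative^[k] P).eval y)
      (f₁ x - (derivative^[k + 1] P).eval x) x := fun x hx => by
  rw [Function.iterate_succ_apply']
  exact (hf x hx).sub ((derivative^[k] P).hasDerivAt x)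

variable [I.OrdConnected]

theorem exists_eq_two_mul_hermiteCoeff₂ (hf : ∀ x ∈ I, HasDerivAt f (f₁ x) x)
    (hf₁ : ∀ x ∈ I, HasDerivAt f₁ (f₂ x) x) (ha : a ∈ I) (hb : b ∈ I) (hab : a < b) :
    ∃ ζ ∈ I, f₂ ζ = 2 * hermiteCoeff₂ f f₁ a b := by
  set P := newtonCubic a b (f a) (f₁ a) (hermiteCoeff₂ f f₁ a b) 0
  have hfb : f b - P.eval b = 0 := by
    rw [eval_newtonCubic_right, hermiteCoeff₂]
    field_simp [sub_ne_zero.2 hab.ne']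
    ring
  obtain ⟨c, hc, hac, -, hc₀⟩ := exists_mem_hasDerivAt_eq_zero
    (hasDerivAt_sub_eval_iterate_derivative P 0 hf) ha hb hab (by simp [P]) hfb
  obtain ⟨ζ, hζ, -, -, hζ₀⟩ := exists_mem_hasDerivAt_eq_zero
    (hasDerivAt_sub_eval_iterate_derivative P 1 hf₁) ha hc hac (by simp [P]) hc₀
  rw [eval_iterate_derivative_two_newtonCubic] at hζ₀
  exact ⟨ζ, hζ, by linarith⟩

theorem exists_eq_six_mul_hermiteCoeff₃ (hf : ∀ x ∈ I, HasDerivAt f (f₁ x) x)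
    (hf₁ : ∀ x ∈ I, HasDerivAt f₁ (f₂ x) x) (hf₂ : ∀ x ∈ I, HasDerivAt f₂ (f₃ x) x)
    (ha : a ∈ I) (hb : b ∈ I) (hab : a < b) :
    ∃ ξ ∈ I, f₃ ξ = 6 * hermiteCoeff₃ f f₁ a b := by
  set P := hermiteCubic f f₁ a b
  have hg₁ := hasDerivAt_sub_eval_iterate_derivative P 1 hf₁
  have hg₂ := hasDerivAt_sub_eval_iterate_derivative P 2 hf₂
  obtain ⟨c, hc, hac, hcb, hc₀⟩ := exists_mem_hasDerivAt_eq_zero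
    (hasDerivAt_sub_eval_iterate_derivative P 0 hf) ha hb hab (by simp [P, hermiteCubic])
    (by simp [P, eval_hermiteCubic_right hab.ne])
  obtain ⟨ξ, hξ, hξ₀⟩ := exists_second_deriv_eq_zero hg₁ hg₂ ha hc hb hac hcb
    (by simp [P, hermiteCubic]) hc₀ (by simp [P, eval_derivative_hermiteCubic_right hab.ne])
  simp only [P, hermiteCubic, Nat.reduceAdd, eval_iterate_derivative_three_newtonCubic] at hξ₀
  exact ⟨ξ, hξ, by linarith⟩

theorem eval_hermiteCubic_lt (hf : ∀ x ∈ I, HasDerivAt f (f₁ x) x)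
    (hf₁ : ∀ x ∈ I, HasDerivAt f₁ (f₂ x) x) (hf₂ : ∀ x ∈ I, HasDerivAt f₂ (f₃ x) x)
    (hf₃ : ∀ x ∈ I, HasDerivAt f₃ (f₄ x) x) (hf₄ : ∀ x ∈ I, 0 < f₄ x)
    (ha : a ∈ I) (hb : b ∈ I) (hab : a < b) {t : ℝ} (ht : t ∈ I) (hta : t ≠ a) (htb : t ≠ b) :
    (hermiteCubic f f₁ a b).eval t < f t := by
  set P := hermiteCubic f f₁ a b
  set q : ℝ[X] := (X - C a) ^ 2 * (X - C b) ^ 2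
  have hqt : 0 < q.eval t := by
    have := sub_ne_zero.2 hta
    have := sub_ne_zero.2 htb
    simp only [q, eval_mul, eval_pow, eval_sub, eval_X, eval_C]
    positivity
  -- `m` is chosen so that `f - Q` vanishes at `t` as well; then `f⁽⁴⁾ ξ = 24 * m` for some `ξ`.
  set m := (f t - P.eval t) / q.eval t
  set Q := P + C m * q
  obtain ⟨ξ, hξ, hξ₀⟩ := exists_fourth_deriv_eq_zero
    (hasDerivAt_sub_eval_iterate_derivative Q 0 hf)
    (hasDerivAt_sub_eval_iterate_derivative Q 1 hf₁)
    (hasDerivAt_sub_eval_iterate_derivative Q 2 hf₂)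
    (hasDerivAt_sub_eval_iterate_derivative Q 3 hf₃) ha hb ht hab hta htb
    (by simp [Q, P, q, hermiteCubic])
    (by simp [Q, P, q, hermiteCubic, sq])
    (by simp [Q, P, q, eval_hermiteCubic_right hab.ne])
    (by simp [Q, P, q, eval_derivative_hermiteCubic_right hab.ne, sq])
    (by
      simp only [Function.iterate_zero, id, Q, eval_add, eval_mul, eval_C, m]
      field_simp
      ring)
  have hq₄ : (derivative^[4] q).eval ξ = 24 := by
    simp only [q, sq, Function.iterate_succ, Function.iterate_zero_apply, Function.comp_apply,
      derivative_mul, derivative_sub, derivative_add, derivative_X, derivative_C, derivative_one,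
      derivative_zero, eval_add, eval_mul, eval_sub, eval_X, eval_C, eval_one, eval_zero]
    ring
  simp only [Q, P, hermiteCubic, Nat.reduceAdd, iterate_map_add,
    iterate_derivative_four_newtonCubic, iterate_derivative_C_mul, zero_add, eval_mul, eval_C,
    hq₄] at hξ₀
  have hm : 0 < m := by linarith [hf₄ ξ hξ]
  rw [← sub_pos, ← div_mul_cancel₀ (f t - P.eval t) hqt.ne']
  exact mul_pos hm hqt

end Hermite

section FramePotential

open Finset

variable {ι : Type*} [Fintype ι]

noncomputable def framePotential {E : Type*} [NormedAddCommGroup E] [InnerProductSpace ℝ E]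
    (k : ℕ) (x : ι → E) : ℝ :=
  ∑ i, ∑ j, inner ℝ (x i) (x j) ^ k

theorem framePotential_one {E : Type*} [NormedAddCommGroup E] [InnerProductSpace ℝ E]
    (x : ι → E) : framePotential 1 x = ‖∑ i, x i‖ ^ 2 := by
  simp only [framePotential, pow_one, ← inner_sum, ← sum_inner, real_inner_self_eq_norm_sq]

variable {n : Type*} [Fintype n]

theorem inner_pow_eq_sum_prod (u v : EuclideanSpace ℝ n) (k : ℕ) :
    inner ℝ u v ^ k = ∑ a : Fin k → n, (∏ l, u (a l)) * ∏ l, v (a l) := by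
  simp only [PiLp.inner_apply, RCLike.inner_apply, conj_trivial, sum_pow', Fintype.piFinset_univ,
    prod_mul_distrib]
  exact sum_congr rfl fun _ _ => mul_comm _ _

/-- Since `⟪u, v⟫ ^ k = ⟪u ^ ⊗k, v ^ ⊗k⟫`, `framePotential k x` is `‖∑ i, x i ^ ⊗k‖ ^ 2`;
this is its coordinate form. -/
theorem framePotential_eq_sum_sq (x : ι → EuclideanSpace ℝ n) (k : ℕ) :
    framePotential k x = ∑ a : Fin k → n, (∑ i, ∏ l, x i (a l)) ^ 2 := by
  simp only [framePotential, inner_pow_eq_sum_prod, sq, sum_mul_sum]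
  trans ∑ i, ∑ a : Fin k → n, ∑ j, (∏ l, x i (a l)) * ∏ l, x j (a l)
  · exact sum_congr rfl fun i _ => sum_comm
  · exact sum_comm

theorem framePotential_nonneg (x : ι → EuclideanSpace ℝ n) (k : ℕ) :
    0 ≤ framePotential k x := by
  rw [framePotential_eq_sum_sq]
  exact sum_nonneg fun _ _ => sq_nonneg _

theorem sq_sum_norm_sq_le_card_mul_framePotential_two (x : ι → EuclideanSpace ℝ n) :
    (∑ i, ‖x i‖ ^ 2) ^ 2 ≤ Fintype.card n * framePotential 2 x := by
  classical
  -- Keep the diagonal of the frame operator `∑ i, x i ⊗ x i` and apply Cauchy–Schwarz to it.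
  have hdiag : ∑ c : n, (∑ i, x i c ^ 2) ^ 2 ≤ framePotential 2 x := by
    rw [framePotential_eq_sum_sq]
    calc ∑ c : n, (∑ i, x i c ^ 2) ^ 2
        = ∑ a ∈ univ.image (fun c : n => fun _ : Fin 2 => c), (∑ i, ∏ l, x i (a l)) ^ 2 := by
          rw [sum_image fun c _ d _ h => congrFun h 0]
          simp
      _ ≤ _ := sum_le_sum_of_subset_of_nonneg (subset_univ _) fun _ _ _ => sq_nonneg _
  have hnorm : ∑ i, ‖x i‖ ^ 2 = ∑ c : n, ∑ i, x i c ^ 2 := by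
    simp only [EuclideanSpace.real_norm_sq_eq]
    exact sum_comm
  rw [hnorm]
  calc _ ≤ (Fintype.card n : ℝ) * ∑ c : n, (∑ i, x i c ^ 2) ^ 2 := sq_sum_le_card_mul_sum_sq
    _ ≤ _ := by gcongr

end FramePotential

section UnitVectors

open Finset

variable {E : Type*} [NormedAddCommGroup E] [InnerProductSpace ℝ E]
  {ι : Type*} [Fintype ι] [DecidableEq ι]

theorem sum_offDiag_eq_sum_sum_erase {M : Type*} [AddCommMonoid M] (G : ι → ι → M) :
    ∑ p ∈ univ.offDiag, G p.1 p.2 = ∑ i, ∑ j ∈ univ.erase i, G i j :=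
  sum_finset_product' _ _ _ fun p => by simp [ne_comm]

theorem norm_sub_sq_of_norm_eq_one {u v : E} (hu : ‖u‖ = 1) (hv : ‖v‖ = 1) :
    ‖u - v‖ ^ 2 = 2 - 2 * inner ℝ u v := by
  rw [norm_sub_sq_real, hu, hv]
  ring

theorem sum_offDiag_inner_eq (φ : ℝ → ℝ) {y : ι → E} (hy : ∀ i, ‖y i‖ = 1) :
    ∑ p ∈ univ.offDiag, φ (inner ℝ (y p.1) (y p.2))
      = ∑ i, ∑ j, φ (inner ℝ (y i) (y j)) - Fintype.card ι * φ 1 := by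
  rw [sum_offDiag_eq_sum_sum_erase fun i j => φ (inner ℝ (y i) (y j))]
  simp [sum_erase_eq_sub, hy]

theorem sum_offDiag_cubic_inner {y : ι → E} (hy : ∀ i, ‖y i‖ = 1) (c₀ c₁ c₂ c₃ : ℝ) :
    ∑ p ∈ univ.offDiag, (c₀ + c₁ * inner ℝ (y p.1) (y p.2) + c₂ * inner ℝ (y p.1) (y p.2) ^ 2
        + c₃ * inner ℝ (y p.1) (y p.2) ^ 3)
      = c₀ * Fintype.card ι ^ 2 + c₁ * framePotential 1 y + c₂ * framePotential 2 y
        + c₃ * framePotential 3 y - Fintype.card ι * (c₀ + c₁ + c₂ + c₃) := by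
  rw [sum_offDiag_inner_eq (fun s => c₀ + c₁ * s + c₂ * s ^ 2 + c₃ * s ^ 3) hy]
  simp only [framePotential, sum_add_distrib, ← mul_sum, pow_one, sum_const, card_univ,
    nsmul_eq_mul]
  ring

end UnitVectors

section Octahedron

open Finset Module

variable {E : Type*} [NormedAddCommGroup E] [InnerProductSpace ℝ E]

theorem exists_eq_neg_of_sum_eq_zero {ι : Type*} [Fintype ι] {y : ι → E}
    (hy : ∀ i, ‖y i‖ = 1) (hy₀ : ∀ i j, i ≠ j → y j = -y i ∨ inner ℝ (y i) (y j) = 0)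
    (hsum : ∑ i, y i = 0) (i : ι) : ∃ j, y j = -y i := by
  by_contra! h
  have : inner ℝ (y i) (∑ j, y j) = 1 := by
    rw [inner_sum, sum_eq_single i (fun j _ hji => (hy₀ i j hji.symm).resolve_left (h j))
      (by simp), real_inner_self_eq_norm_sq, hy i, one_pow]
  simp [hsum] at this

theorem eq_zero_of_inner_eq_zero_of_finrank_eq_three (hE : finrank ℝ E = 3) {u v w x : E}
    (hu : ‖u‖ = 1) (hv : ‖v‖ = 1) (hw : ‖w‖ = 1) (huv : inner ℝ u v = 0)
    (huw : inner ℝ u w = 0) (hvw : inner ℝ v w = 0) (hux : inner ℝ u x = 0)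
    (hvx : inner ℝ v x = 0) (hwx : inner ℝ w x = 0) : x = 0 := by
  have hon : Orthonormal ℝ ![u, v, w] := by
    rw [orthonormal_iff_ite]
    intro i j
    fin_cases i <;> fin_cases j <;>
      simp [real_inner_comm, hu, hv, hw, huv, huw, hvw]
  let b := basisOfOrthonormalOfCardEqFinrank hon (by simp [hE])
  refine InnerProductSpace.ext_inner_left_basis b fun i => ?_
  fin_cases i <;> simp [b, hux, hvx, hwx]

theorem exists_orthonormal_eq_octahedron (hE : finrank ℝ E = 3) (S : Finset E) (hS : 5 ≤ #S)
    (hnorm : ∀ p ∈ S, ‖p‖ = 1) (hneg : ∀ p ∈ S, -p ∈ S)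
    (horth : ∀ p ∈ S, ∀ q ∈ S, q ≠ p → q ≠ -p → inner ℝ p q = 0) :
    ∃ u v w : E, ‖u‖ = 1 ∧ ‖v‖ = 1 ∧ ‖w‖ = 1 ∧
      inner ℝ u v = (0 : ℝ) ∧ inner ℝ u w = (0 : ℝ) ∧ inner ℝ v w = (0 : ℝ) ∧
      (S : Set E) = {u, -u, v, -v, w, -w} := by
  classical
  obtain ⟨u, hu⟩ := card_pos.1 (by omega : 0 < #S)
  obtain ⟨v, hv, hv'⟩ := exists_mem_notMem_of_card_lt_card (s := {u, -u}) (t := S)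
    (card_le_two.trans_lt (by omega))
  obtain ⟨w, hw, hw'⟩ := exists_mem_notMem_of_card_lt_card (s := {u, -u, v, -v}) (t := S)
    (card_le_four.trans_lt (by omega))
  simp only [Finset.mem_insert, Finset.mem_singleton, not_or] at hv' hw'
  have huv := horth u hu v hv hv'.1 hv'.2
  have huw := horth u hu w hw hw'.1 hw'.2.1
  have hvw := horth v hv w hw hw'.2.2.1 hw'.2.2.2
  refine ⟨u, v, w, hnorm u hu, hnorm v hv, hnorm w hw, huv, huw, hvw, Set.ext fun x => ?_⟩
  simp only [mem_coe, Set.mem_insert_iff, Set.mem_singleton_iff]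
  refine ⟨fun hx => ?_, ?_⟩
  · -- a point outside `{±u, ±v, ±w}` would be orthogonal to a basis of `E`
    by_contra! h
    have hx₀ := eq_zero_of_inner_eq_zero_of_finrank_eq_three hE (hnorm u hu) (hnorm v hv)
      (hnorm w hw) huv huw hvw (horth u hu x hx h.1 h.2.1) (horth v hv x hx h.2.2.1 h.2.2.2.1)
      (horth w hw x hx h.2.2.2.2.1 h.2.2.2.2.2)
    simpa [hx₀] using hnorm x hx
  · rintro (rfl | rfl | rfl | rfl | rfl | rfl) <;> simp [hneg, hu, hv, hw]

theorem exists_orthonormal_range_eq_octahedron (hE : finrank ℝ E = 3) {ι : Type*} [Fintype ι]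
    {y : ι → E} (hcard : 5 ≤ Fintype.card ι) (hy : ∀ i, ‖y i‖ = 1) (hinj : Function.Injective y)
    (hy₀ : ∀ i j, i ≠ j → y j = -y i ∨ inner ℝ (y i) (y j) = 0) (hsum : ∑ i, y i = 0) :
    ∃ u v w : E, ‖u‖ = 1 ∧ ‖v‖ = 1 ∧ ‖w‖ = 1 ∧
      inner ℝ u v = (0 : ℝ) ∧ inner ℝ u w = (0 : ℝ) ∧ inner ℝ v w = (0 : ℝ) ∧
      Set.range y = {u, -u, v, -v, w, -w} := by
  classical
  obtain ⟨u, v, w, hu, hv, hw, huv, huw, hvw, hS⟩ := exists_orthonormal_eq_octahedron hE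
    (univ.image y) (by rwa [card_image_of_injective _ hinj, card_univ]) (by simp [hy])
    (by simpa using fun i => exists_eq_neg_of_sum_eq_zero hy hy₀ hsum i)
    (by
      simp only [mem_image, mem_univ, true_and]
      rintro _ ⟨i, rfl⟩ _ ⟨j, rfl⟩ hji hji'
      exact (hy₀ i j fun h => hji (h ▸ rfl)).resolve_left hji')
  refine ⟨u, v, w, hu, hv, hw, huv, huw, hvw, ?_⟩
  rwa [coe_image, coe_univ, Set.image_univ] at hS

theorem neg_mem_octahedron {G : Type*} [InvolutiveNeg G] {u v w p : G}
    (hp : p ∈ ({u, -u, v, -v, w, -w} : Set G)) : -p ∈ ({u, -u, v, -v, w, -w} : Set G) := by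
  simp only [Set.mem_insert_iff, Set.mem_singleton_iff] at hp ⊢
  rcases hp with rfl | rfl | rfl | rfl | rfl | rfl <;> simp

theorem inner_eq_zero_of_mem_octahedron {u v w p q : E} (huv : inner ℝ u v = 0)
    (huw : inner ℝ u w = 0) (hvw : inner ℝ v w = 0)
    (hp : p ∈ ({u, -u, v, -v, w, -w} : Set E)) (hq : q ∈ ({u, -u, v, -v, w, -w} : Set E))
    (hqp : q ≠ p) (hqp' : q ≠ -p) : inner ℝ p q = 0 := by
  simp only [Set.mem_insert_iff, Set.mem_singleton_iff] at hp hq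
  rcases hp with rfl | rfl | rfl | rfl | rfl | rfl <;>
    rcases hq with rfl | rfl | rfl | rfl | rfl | rfl <;>
    simp_all [real_inner_comm]

theorem sum_offDiag_eq_of_forall_exists_eq_neg (F : ℝ → ℝ) {ι : Type*} [Fintype ι]
    [DecidableEq ι] {y : ι → E} (hy : ∀ i, ‖y i‖ = 1) (hinj : Function.Injective y)
    (hy₀ : ∀ i j, i ≠ j → y j = -y i ∨ inner ℝ (y i) (y j) = 0) (hneg : ∀ i, ∃ j, y j = -y i) :
    ∑ p ∈ univ.offDiag, F (‖y p.1 - y p.2‖ ^ 2)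
      = Fintype.card ι * (F 4 + (Fintype.card ι - 2 : ℕ) * F 2) := by
  rw [sum_offDiag_eq_sum_sum_erase fun i j => F (‖y i - y j‖ ^ 2)]
  have hrow : ∀ i, ∑ j ∈ univ.erase i, F (‖y i - y j‖ ^ 2)
      = F 4 + (Fintype.card ι - 2 : ℕ) * F 2 := by
    intro i
    obtain ⟨j, hj⟩ := hneg i
    have hji : j ≠ i := by
      rintro rfl
      have := congrArg (inner ℝ (y j)) hj
      norm_num [real_inner_self_eq_norm_sq, hy j] at this
    rw [← add_sum_erase _ _ (mem_erase.2 ⟨hji, mem_univ j⟩)]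
    have h4 : ‖y i - y j‖ ^ 2 = 4 := by
      rw [norm_sub_sq_of_norm_eq_one (hy i) (hy j), hj, inner_neg_right,
        real_inner_self_eq_norm_sq, hy i]
      norm_num
    have h2 : ∀ k ∈ (univ.erase i).erase j, ‖y i - y k‖ ^ 2 = 2 := by
      intro k hk
      obtain ⟨hkj, hki⟩ := by simpa using hk
      have hk₀ := (hy₀ i k (Ne.symm hki)).resolve_left fun h => hkj (hinj (h.trans hj.symm))
      rw [norm_sub_sq_of_norm_eq_one (hy i) (hy k), hk₀]
      norm_num
    rw [h4, sum_congr rfl fun k hk => by rw [h2 k hk], sum_const, card_erase_of_mem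
      (mem_erase.2 ⟨hji, mem_univ j⟩), card_erase_of_mem (mem_univ i), card_univ, nsmul_eq_mul,
      Nat.sub_sub]
  simp only [hrow, sum_const, card_univ, nsmul_eq_mul]

theorem sum_offDiag_eq_of_range_eq_octahedron (F : ℝ → ℝ) {y : Fin 6 → E} (hy : ∀ i, ‖y i‖ = 1)
    (hinj : Function.Injective y) {u v w : E} (huv : inner ℝ u v = 0) (huw : inner ℝ u w = 0)
    (hvw : inner ℝ v w = 0) (hrange : Set.range y = {u, -u, v, -v, w, -w}) :
    ∑ p ∈ univ.offDiag, F (‖y p.1 - y p.2‖ ^ 2) = 24 * F 2 + 6 * F 4 := by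
  have hmem : ∀ i, y i ∈ ({u, -u, v, -v, w, -w} : Set E) := fun i => hrange ▸ ⟨i, rfl⟩
  rw [sum_offDiag_eq_of_forall_exists_eq_neg F hy hinj]
  · simp only [Fintype.card_fin, Nat.reduceSub, Nat.cast_ofNat]
    ring
  · intro i j hij
    by_cases h : y j = -y i
    · exact Or.inl h
    · exact Or.inr (inner_eq_zero_of_mem_octahedron huv huw hvw (hmem i) (hmem j)
        (hinj.ne hij.symm) h)
  · intro i
    obtain ⟨j, hj⟩ : -y i ∈ Set.range y := hrange ▸ neg_mem_octahedron (hmem i)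
    exact ⟨j, hj⟩

end Octahedron

section SixPoints

open Finset

noncomputable def sqKernelHermite (κ : ℝ) : ℝ[X] :=
  hermiteCubic (sqKernelDeriv κ 0) (sqKernelDeriv κ 1) 2 4

variable {κ : ℝ}

theorem hermiteCoeff₂_sqKernel_pos (hκ : 0 ≤ κ) :
    0 < hermiteCoeff₂ (sqKernelDeriv κ 0) (sqKernelDeriv κ 1) 2 4 := by
  obtain ⟨ζ, hζ, h⟩ := exists_eq_two_mul_hermiteCoeff₂ (I := Set.Ioi 0) (a := 2) (b := 4)
    (hasDerivAt_sqKernelDeriv κ 0) (hasDerivAt_sqKernelDeriv κ 1)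
    (by norm_num) (by norm_num) (by norm_num)
  have := neg_one_pow_mul_sqKernelDeriv_pos hκ hζ (k := 2) (by norm_num)
  norm_num at this
  linarith

theorem hermiteCoeff₃_sqKernel_neg (hκ : 0 ≤ κ) :
    hermiteCoeff₃ (sqKernelDeriv κ 0) (sqKernelDeriv κ 1) 2 4 < 0 := by
  obtain ⟨ξ, hξ, h⟩ := exists_eq_six_mul_hermiteCoeff₃ (I := Set.Ioi 0) (a := 2) (b := 4)
    (hasDerivAt_sqKernelDeriv κ 0) (hasDerivAt_sqKernelDeriv κ 1)
    (hasDerivAt_sqKernelDeriv κ 2) (by norm_num) (by norm_num) (by norm_num)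
  have := neg_one_pow_mul_sqKernelDeriv_pos hκ hξ (k := 3) (by norm_num)
  norm_num at this
  linarith

theorem eval_sqKernelHermite_lt (hκ : 0 ≤ κ) {t : ℝ} (ht : 0 < t) (h2 : t ≠ 2) (h4 : t ≠ 4) :
    (sqKernelHermite κ).eval t < sqKernelDeriv κ 0 t :=
  eval_hermiteCubic_lt (I := Set.Ioi 0) (hasDerivAt_sqKernelDeriv κ 0)
    (hasDerivAt_sqKernelDeriv κ 1) (hasDerivAt_sqKernelDeriv κ 2) (hasDerivAt_sqKernelDeriv κ 3)
    (fun x hx => by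
      have := neg_one_pow_mul_sqKernelDeriv_pos hκ hx (k := 4) le_rfl
      norm_num at this
      exact this)
    (by norm_num) (by norm_num) (by norm_num) ht h2 h4

theorem eval_sqKernelHermite_le (hκ : 0 ≤ κ) {t : ℝ} (ht : 0 < t) :
    (sqKernelHermite κ).eval t ≤ sqKernelDeriv κ 0 t := by
  rcases eq_or_ne t 2 with rfl | h2
  · simp [sqKernelHermite, hermiteCubic, newtonCubic]
  rcases eq_or_ne t 4 with rfl | h4
  · rw [sqKernelHermite, eval_hermiteCubic_right (by norm_num)]
  exact (eval_sqKernelHermite_lt hκ ht h2 h4).le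

theorem eval_sqKernelHermite_le_of_ne (hκ : 0 ≤ κ) {E : Type*} [NormedAddCommGroup E]
    {u v : E} (huv : u ≠ v) :
    (sqKernelHermite κ).eval (‖u - v‖ ^ 2) ≤ sqKernelDeriv κ 0 (‖u - v‖ ^ 2) := by
  have := sub_ne_zero.2 huv
  exact eval_sqKernelHermite_le hκ (by positivity)

theorem eq_neg_or_inner_eq_zero_of_eval_sqKernelHermite_eq (hκ : 0 ≤ κ) {E : Type*}
    [NormedAddCommGroup E] [InnerProductSpace ℝ E] {u v : E}
    (hu : ‖u‖ = 1) (hv : ‖v‖ = 1) (huv : u ≠ v)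
    (h : sqKernelDeriv κ 0 (‖u - v‖ ^ 2) - (sqKernelHermite κ).eval (‖u - v‖ ^ 2) = 0) :
    v = -u ∨ inner ℝ u v = 0 := by
  have ht : 0 < ‖u - v‖ ^ 2 := by
    have := sub_ne_zero.2 huv
    positivity
  rw [norm_sub_sq_of_norm_eq_one hu hv] at ht h
  by_contra! h'
  refine (eval_sqKernelHermite_lt hκ ht ?_ ?_).ne (sub_eq_zero.1 h).symm
  · intro h2
    exact h'.2 (by linarith)
  · intro h4
    have huv' : u = -v := (inner_eq_neg_one_iff_of_norm_eq_one (𝕜 := ℝ) hu hv).1 (by linarith)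
    exact h'.1 (by rw [huv', neg_neg])

variable {y : Fin 6 → EuclideanSpace ℝ (Fin 3)}

theorem sum_offDiag_sqKernel_ge_bound_add (hκ : 0 ≤ κ) (hy : ∀ i, ‖y i‖ = 1) :
    24 * sqKernelDeriv κ 0 2 + 6 * sqKernelDeriv κ 0 4
        + ∑ p ∈ univ.offDiag, (sqKernelDeriv κ 0 (‖y p.1 - y p.2‖ ^ 2)
          - (sqKernelHermite κ).eval (‖y p.1 - y p.2‖ ^ 2))
        - 2 * sqKernelDeriv κ 1 2 * ‖∑ i, y i‖ ^ 2
      ≤ ∑ p ∈ univ.offDiag, sqKernelDeriv κ 0 (‖y p.1 - y p.2‖ ^ 2) := by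
  set f := sqKernelDeriv κ 0
  set f₁ := sqKernelDeriv κ 1
  set c₂ := hermiteCoeff₂ f f₁ 2 4
  set c₃ := hermiteCoeff₃ f f₁ 2 4
  have hp : ∀ s, (sqKernelHermite κ).eval (2 - 2 * s)
      = f 2 + -2 * f₁ 2 * s + (4 * c₂ - 8 * c₃) * s ^ 2 + -8 * c₃ * s ^ 3 := by
    intro s
    simp only [sqKernelHermite, hermiteCubic, newtonCubic, eval_add, eval_mul, eval_sub, eval_pow,
      eval_C, eval_X]
    ring
  have h4 : f 4 = f 2 + 2 * f₁ 2 + 4 * c₂ := by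
    have := eval_hermiteCubic_right (f := f) (f₁ := f₁) (a := 2) (b := 4) (by norm_num)
    rw [hermiteCubic, eval_newtonCubic_right] at this
    linarith
  have hsum : ∑ p ∈ univ.offDiag, (sqKernelHermite κ).eval (‖y p.1 - y p.2‖ ^ 2)
      = ∑ p ∈ univ.offDiag, (f 2 + -2 * f₁ 2 * inner ℝ (y p.1) (y p.2)
        + (4 * c₂ - 8 * c₃) * inner ℝ (y p.1) (y p.2) ^ 2
        + -8 * c₃ * inner ℝ (y p.1) (y p.2) ^ 3) :=
    sum_congr rfl fun p _ => by rw [norm_sub_sq_of_norm_eq_one (hy _) (hy _), hp]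
  have hFP₂ : 12 ≤ framePotential 2 y := by
    have := sq_sum_norm_sq_le_card_mul_framePotential_two y
    simp only [hy, one_pow, sum_const, card_univ, Fintype.card_fin] at this
    norm_num at this
    linarith
  have hFP₃ := framePotential_nonneg y 3
  have hc₂ : 0 < c₂ := hermiteCoeff₂_sqKernel_pos hκ
  have hc₃ : c₃ < 0 := hermiteCoeff₃_sqKernel_neg hκ
  -- with `S k = framePotential k y`, the sum of the Hermite cubic over the pairs is
  -- `24 f(2) + 6 f(4) - 2 f₁(2) S 1 + (4 c₂ - 8 c₃) (S 2 - 12) - 8 c₃ S 3`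
  rw [sum_sub_distrib, hsum, sum_offDiag_cubic_inner hy, framePotential_one, Fintype.card_fin]
  push_cast
  nlinarith [mul_nonneg (by linarith : 0 ≤ 4 * c₂ - 8 * c₃) (sub_nonneg.2 hFP₂),
    mul_nonneg (by linarith : 0 ≤ -8 * c₃) hFP₃]

theorem bound_le_sum_offDiag_sqKernel (hκ : 0 ≤ κ) (hy : ∀ i, ‖y i‖ = 1)
    (hinj : Function.Injective y) :
    24 * sqKernelDeriv κ 0 2 + 6 * sqKernelDeriv κ 0 4
      ≤ ∑ p ∈ univ.offDiag, sqKernelDeriv κ 0 (‖y p.1 - y p.2‖ ^ 2) := by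
  have := sum_offDiag_sqKernel_ge_bound_add hκ hy
  have := sum_nonneg fun p (hp : p ∈ univ.offDiag) =>
    sub_nonneg.2 (eval_sqKernelHermite_le_of_ne hκ (hinj.ne (mem_offDiag.1 hp).2.2))
  nlinarith [sqKernelDeriv_one_neg hκ two_pos, sq_nonneg ‖∑ i, y i‖]

theorem eq_neg_or_inner_eq_zero_of_sum_offDiag_sqKernel_eq (hκ : 0 ≤ κ) (hy : ∀ i, ‖y i‖ = 1)
    (hinj : Function.Injective y)
    (heq : ∑ p ∈ univ.offDiag, sqKernelDeriv κ 0 (‖y p.1 - y p.2‖ ^ 2)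
      = 24 * sqKernelDeriv κ 0 2 + 6 * sqKernelDeriv κ 0 4) :
    (∀ i j, i ≠ j → y j = -y i ∨ inner ℝ (y i) (y j) = 0) ∧ ∑ i, y i = 0 := by
  have hge := sum_offDiag_sqKernel_ge_bound_add hκ hy
  have hf₁ := sqKernelDeriv_one_neg hκ two_pos
  have hterm : ∀ p ∈ univ.offDiag, 0 ≤ sqKernelDeriv κ 0 (‖y p.1 - y p.2‖ ^ 2)
      - (sqKernelHermite κ).eval (‖y p.1 - y p.2‖ ^ 2) := fun p hp =>
    sub_nonneg.2 (eval_sqKernelHermite_le_of_ne hκ (hinj.ne (mem_offDiag.1 hp).2.2))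
  have hR := sum_nonneg hterm
  have hN : 0 ≤ -2 * sqKernelDeriv κ 1 2 * ‖∑ i, y i‖ ^ 2 :=
    mul_nonneg (by linarith) (sq_nonneg _)
  have hR₀ := (sum_eq_zero_iff_of_nonneg hterm).1 (by linarith)
  refine ⟨fun i j hij => ?_, ?_⟩
  · exact eq_neg_or_inner_eq_zero_of_eval_sqKernelHermite_eq hκ (hy i) (hy j) (hinj.ne hij)
      (hR₀ (i, j) (by simp [hij]))
  · have : ‖∑ i, y i‖ ^ 2 = 0 := le_antisymm (by nlinarith) (sq_nonneg _)
    simpa using this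

end SixPoints

theorem sphere_six_points_energy_min (κ : ℝ) (hκ : 0 < κ)
    (y : Fin 6 → EuclideanSpace ℝ (Fin 3)) (hsphere : ∀ j, ‖y j‖ = 1)
    (hdist : Function.Injective y) :
    interactionEnergy κ y ≥
      24 * resolventKernel3D κ (Real.sqrt 2) + 6 * resolventKernel3D κ 2 ∧
    (interactionEnergy κ y =
        24 * resolventKernel3D κ (Real.sqrt 2) + 6 * resolventKernel3D κ 2 ↔
      ∃ u v w : EuclideanSpace ℝ (Fin 3),
        ‖u‖ = 1 ∧ ‖v‖ = 1 ∧ ‖w‖ = 1 ∧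
        inner ℝ u v = (0 : ℝ) ∧ inner ℝ u w = (0 : ℝ) ∧ inner ℝ v w = (0 : ℝ) ∧
        Set.range y = {u, -u, v, -v, w, -w}) := by
  have hπ : 0 < 4 * Real.pi := by positivity
  have hbound : 24 * resolventKernel3D κ (Real.sqrt 2) + 6 * resolventKernel3D κ 2
      = (24 * sqKernelDeriv κ 0 2 + 6 * sqKernelDeriv κ 0 4) / (4 * Real.pi) := by
    rw [resolventKernel3D_eq_sqKernelDeriv κ (Real.sqrt_nonneg 2),
      resolventKernel3D_eq_sqKernelDeriv κ zero_le_two, Real.sq_sqrt zero_le_two,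
      show (2 : ℝ) ^ 2 = 4 by norm_num]
    ring
  rw [interactionEnergy_eq_sum_sqKernelDeriv, hbound, ge_iff_le, div_le_div_iff_of_pos_right hπ,
    div_left_inj' hπ.ne']
  refine ⟨bound_le_sum_offDiag_sqKernel hκ.le hsphere hdist, fun heq => ?_, ?_⟩
  · obtain ⟨hy₀, hsum⟩ := eq_neg_or_inner_eq_zero_of_sum_offDiag_sqKernel_eq hκ.le hsphere hdist heq
    exact exists_orthonormal_range_eq_octahedron finrank_euclideanSpace_fin (by simp) hsphere
      hdist hy₀ hsum
  · rintro ⟨_, _, _, _, _, _, huv, huw, hvw, hrange⟩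
    exact sum_offDiag_eq_of_range_eq_octahedron _ hsphere hdist huv huw hvw hrange
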